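/- arXiv:2106.07848 — 4 statements merged into one kernel-verified Lean document; each statement's English description precedes it below -/
import Mathlib

section
/- Every matrix A ∈ SL(2,ℝ) can be written as A = k₁ u k₂ where k₁, k₂ ∈ SO(2) and u = [[1, t],[0, 1]] for some t ∈ ℝ. Equivalently, SO(2) · U · SO(2) = SL(2,ℝ), where U is the group of upper unitriangular 2×2 real matrices. -/
/-!
Choose a rotation `k` such that `A k` sends `e₁` to a unit vector. Such a `k` exists because the
quadratic form `|A w|² - |w|²` has Gram matrix `AᵀA - 1`, whose determinant `2 - tr (AᵀA)` is
`≤ 0`, so the form vanishes on some unit vector. Then `A k` has determinant one and a unit first column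
`(p, q)`, so it is the rotation with first column `(p, q)` times an upper unitriangular matrix.
-/

open Matrix

section CommRing

variable {R : Type*} [CommRing R]

def planeRotation (c s : R) : Matrix (Fin 2) (Fin 2) R := !![c, -s; s, c]

lemma det_planeRotation (c s : R) : (planeRotation c s).det = c ^ 2 + s ^ 2 := by
  rw [planeRotation, det_fin_two_of]; ring

lemma planeRotation_transpose_mul_self {c s : R} (h : c ^ 2 + s ^ 2 = 1) :
    (planeRotation c s)ᵀ * planeRotation c s = 1 := by
  ext i j
  fin_cases i <;> fin_cases j <;> simp [planeRotation, mul_apply, Fin.sum_univ_two] <;> grind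

lemma eq_planeRotation_mul_unipotent_of_det_eq_one {M : Matrix (Fin 2) (Fin 2) R} (hdet : M.det = 1)
    (hcol : M 0 0 ^ 2 + M 1 0 ^ 2 = 1) :
    M = planeRotation (M 0 0) (M 1 0) * !![1, M 0 0 * M 0 1 + M 1 0 * M 1 1; 0, 1] := by
  rw [det_fin_two] at hdet
  ext i j
  fin_cases i <;> fin_cases j <;> simp [planeRotation, mul_apply, Fin.sum_univ_two] <;> grind

end CommRing

lemma exists_isotropic_unit_vector_of_mul_le_sq {p q r : ℝ} (h : p * r ≤ q ^ 2) :
    ∃ x y : ℝ, x ^ 2 + y ^ 2 = 1 ∧ p * x ^ 2 + 2 * q * x * y + r * y ^ 2 = 0 := by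
  obtain ⟨x, y, hxy, hQ⟩ :
      ∃ x y : ℝ, 0 < x ^ 2 + y ^ 2 ∧ p * x ^ 2 + 2 * q * x * y + r * y ^ 2 = 0 := by
    rcases eq_or_ne p 0 with rfl | hp
    · exact ⟨1, 0, by norm_num, by ring⟩
    · refine ⟨-q + √(q ^ 2 - p * r), p, by positivity, ?_⟩
      linear_combination p * Real.sq_sqrt (sub_nonneg.2 h)
  have hn : √(x ^ 2 + y ^ 2) ^ 2 = x ^ 2 + y ^ 2 := Real.sq_sqrt hxy.le
  have hn0 : √(x ^ 2 + y ^ 2) ≠ 0 := (Real.sqrt_pos.2 hxy).ne'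
  refine ⟨x / √(x ^ 2 + y ^ 2), y / √(x ^ 2 + y ^ 2), ?_, ?_⟩
  · field_simp
    linear_combination -hn
  · field_simp
    linear_combination hQ

lemma exists_planeRotation_mul_first_column_unit {A : Matrix (Fin 2) (Fin 2) ℝ} (hA : A.det = 1) :
    ∃ c s : ℝ, c ^ 2 + s ^ 2 = 1 ∧
      (A * planeRotation c s) 0 0 ^ 2 + (A * planeRotation c s) 1 0 ^ 2 = 1 := by
  rw [det_fin_two] at hA
  have hdisc : (A 0 0 ^ 2 + A 1 0 ^ 2 - 1) * (A 0 1 ^ 2 + A 1 1 ^ 2 - 1)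
      ≤ (A 0 0 * A 0 1 + A 1 0 * A 1 1) ^ 2 := by
    nlinarith [sq_nonneg (A 0 0 - A 1 1), sq_nonneg (A 0 1 + A 1 0)]
  obtain ⟨c, s, hcs, hQ⟩ := exists_isotropic_unit_vector_of_mul_le_sq hdisc
  refine ⟨c, s, hcs, ?_⟩
  simp only [planeRotation, mul_apply, Fin.sum_univ_two, of_apply, cons_val', cons_val_zero,
    cons_val_one, empty_val', cons_val_fin_one]
  linear_combination hQ + hcs

/-- **Theorem.** Every `A ∈ SL(2, ℝ)` can be written as `A = k₁ u k₂` with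
`k₁, k₂ ∈ SO(2)` and `u = [[1, t], [0, 1]]` upper unitriangular; that is,
`SO(2) · U · SO(2) = SL(2, ℝ)`. -/
theorem so2_mul_unipotent_mul_so2_eq_sl2 (A : Matrix (Fin 2) (Fin 2) ℝ) (hA : A.det = 1) :
    ∃ (k₁ k₂ : Matrix (Fin 2) (Fin 2) ℝ) (t : ℝ),
      k₁.det = 1 ∧ k₁ᵀ * k₁ = 1 ∧ k₂.det = 1 ∧ k₂ᵀ * k₂ = 1 ∧
      A = k₁ * !![1, t; 0, 1] * k₂ := by
  obtain ⟨c, s, hcs, hcol⟩ := exists_planeRotation_mul_first_column_unit hA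
  set M := A * planeRotation c s with hMdef
  have hM : M.det = 1 := by rw [det_mul, hA, det_planeRotation, hcs, one_mul]
  have hK : planeRotation c s * (planeRotation c s)ᵀ = 1 :=
    mul_eq_one_comm.mp (planeRotation_transpose_mul_self hcs)
  refine ⟨planeRotation (M 0 0) (M 1 0), (planeRotation c s)ᵀ, M 0 0 * M 0 1 + M 1 0 * M 1 1,
    by rw [det_planeRotation, hcol], planeRotation_transpose_mul_self hcol,
    by rw [det_transpose, det_planeRotation, hcs], by rw [transpose_transpose, hK], ?_⟩
  rw [← eq_planeRotation_mul_unipotent_of_det_eq_one hM hcol, hMdef, mul_assoc, hK, mul_one]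
end

section
/- Let g be a finite-dimensional real Lie algebra, θ a Lie algebra automorphism of g with θ∘θ = id, and B a symmetric bilinear form on g that is invariant (B([x,y],z) + B(y,[x,z]) = 0 for all x,y,z ∈ g) and θ-invariant (B(θx, θy) = B(x,y)), such that B_θ(x,y) := −B(x, θy) is positive definite. Let p = {x ∈ g : θx = −x} and let a ⊆ p be a maximal abelian subspace of p (i.e., [a,a] = 0, and every x ∈ p with [x, z] = 0 for all z ∈ a lies in a). For a linear functional λ on a set g_λ = {x ∈ g : [Z, x] = λ(Z)x for all Z ∈ a}. Let λ be a nonzero linear functional on a with g_λ ≠ 0, and let X, X' ∈ g_λ. If [X, θX'] = 0, then X = 0 or X' = 0. -/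
/-!
Put `H = ⁅θ X', X'⁆`. Since `θ` maps `g_λ` to `g_{-λ}`, `H` lies in `g_0 ∩ p`, hence in `a` by
maximality. Writing `N u = -B u (θ u)`, invariance of `B` gives `B H Z = λ(Z) N X'` for `Z ∈ a`, so
`N H = B H H = λ(H) N X'` and `λ(H) ≥ 0`. On the other hand `[X, θ X'] = 0` and the Jacobi identity
give `⁅H, X⁆ = ⁅θ X', ⁅X', X⁆⁆`, whence `λ(H) N X = -N ⁅X', X⁆` and `λ(H) ≤ 0`. So `λ(H) = 0`,
`N H = 0`, `H = 0`, and then `λ(Z) N X' = B H Z = 0` for all `Z` forces `λ = 0`.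
-/

section RestrictedRootSpace

variable {R L : Type*} [CommRing R] [LieRing L] [LieAlgebra R L]

def restrictedRootSpace (a : Submodule R L) (lam : a →ₗ[R] R) : Submodule R L where
  carrier := {X | ∀ Z : a, ⁅(Z : L), X⁆ = lam Z • X}
  add_mem' hX hY Z := by rw [lie_add, hX Z, hY Z, smul_add]
  zero_mem' Z := by rw [lie_zero, smul_zero]
  smul_mem' c X hX Z := by rw [lie_smul, hX Z, smul_comm]

variable {a : Submodule R L} {lam mu : a →ₗ[R] R}

theorem lie_mem_restrictedRootSpace_add {X Y : L} (hX : X ∈ restrictedRootSpace a lam)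
    (hY : Y ∈ restrictedRootSpace a mu) : ⁅X, Y⁆ ∈ restrictedRootSpace a (lam + mu) := fun Z => by
  rw [leibniz_lie, hX Z, hY Z, smul_lie, lie_smul, LinearMap.add_apply, add_smul, add_comm]

theorem apply_mem_restrictedRootSpace_neg (θ : L →ₗ⁅R⁆ L) (hθ : ∀ x, θ (θ x) = x)
    (ha : ∀ x ∈ a, θ x = -x) {X : L} (hX : X ∈ restrictedRootSpace a lam) :
    θ X ∈ restrictedRootSpace a (-lam) := fun Z =>
  calc ⁅(Z : L), θ X⁆ = θ ⁅θ Z, X⁆ := by rw [LieHom.map_lie, hθ]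
    _ = (-lam) Z • θ X := by
      rw [ha Z Z.2, neg_lie, hX Z, map_neg, map_smul, LinearMap.neg_apply, neg_smul]

theorem mem_of_mem_restrictedRootSpace_zero (θ : L →ₗ⁅R⁆ L)
    (ha_max : ∀ x : L, θ x = -x → (∀ z ∈ a, ⁅x, z⁆ = 0) → x ∈ a) {x : L}
    (hθx : θ x = -x) (hx : x ∈ restrictedRootSpace a 0) : x ∈ a :=
  ha_max x hθx fun z hz => by rw [← lie_skew, hx ⟨z, hz⟩, LinearMap.zero_apply, zero_smul, neg_zero]

theorem apply_lie_apply_self (θ : L →ₗ⁅R⁆ L) (hθ : ∀ x, θ (θ x) = x) (x : L) :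
    θ ⁅θ x, x⁆ = -⁅θ x, x⁆ := by
  rw [LieHom.map_lie, hθ, ← lie_skew]

theorem lie_apply_self_mem (θ : L →ₗ⁅R⁆ L) (hθ : ∀ x, θ (θ x) = x) (ha : ∀ x ∈ a, θ x = -x)
    (ha_max : ∀ x : L, θ x = -x → (∀ z ∈ a, ⁅x, z⁆ = 0) → x ∈ a)
    {X : L} (hX : X ∈ restrictedRootSpace a lam) : ⁅θ X, X⁆ ∈ a := by
  have h0 := lie_mem_restrictedRootSpace_add (apply_mem_restrictedRootSpace_neg θ hθ ha hX) hX
  rw [neg_add_cancel] at h0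
  exact mem_of_mem_restrictedRootSpace_zero θ ha_max (apply_lie_apply_self θ hθ X) h0

end RestrictedRootSpace

section InvariantForm

variable {R L : Type*} [CommRing R] [LieRing L] [LieAlgebra R L] {B : L →ₗ[R] L →ₗ[R] R}

theorem form_lie_apply_of_mem_restrictedRootSpace (hBsymm : ∀ x y, B x y = B y x)
    (hBinv : ∀ x y z : L, B ⁅x, y⁆ z + B y ⁅x, z⁆ = 0)
    {a : Submodule R L} {lam : a →ₗ[R] R} {X : L} (hX : X ∈ restrictedRootSpace a lam)
    (Y : L) (Z : a) : B ⁅Y, X⁆ Z = lam Z * -B X Y := by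
  have h := hBinv X Y Z
  rw [← lie_skew X (Z : L), hX Z, map_neg, map_smul, smul_eq_mul, hBsymm Y X] at h
  rw [← lie_skew, map_neg, LinearMap.neg_apply]
  linear_combination -h

theorem form_apply_lie_lie_apply (θ : L →ₗ⁅R⁆ L)
    (hBinv : ∀ x y z : L, B ⁅x, y⁆ z + B y ⁅x, z⁆ = 0) (x y : L) :
    B ⁅θ x, ⁅x, y⁆⁆ (θ y) = -B ⁅x, y⁆ (θ ⁅x, y⁆) := by
  have h := hBinv (θ x) ⁅x, y⁆ (θ y)
  rw [← LieHom.map_lie] at h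
  linear_combination h

end InvariantForm

theorem restricted_root_bracket_theta_eq_zero_general (L : Type*) [LieRing L] [LieAlgebra ℝ L]
    (θ : L →ₗ⁅ℝ⁆ L) (hθ : ∀ x, θ (θ x) = x)
    (B : L →ₗ[ℝ] L →ₗ[ℝ] ℝ)
    (hBsymm : ∀ x y, B x y = B y x)
    (hBinv : ∀ x y z : L, B ⁅x, y⁆ z + B y ⁅x, z⁆ = 0)
    (hBpos : ∀ x : L, x ≠ 0 → 0 < -B x (θ x))
    (a : Submodule ℝ L)
    (ha_sub_p : ∀ x ∈ a, θ x = -x)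
    (ha_max : ∀ x : L, θ x = -x → (∀ z ∈ a, ⁅x, z⁆ = 0) → x ∈ a)
    (lam : ↥a →ₗ[ℝ] ℝ) (hlam : lam ≠ 0)
    (X X' : L)
    (hX : ∀ Z : ↥a, ⁅(Z : L), X⁆ = lam Z • X)
    (hX' : ∀ Z : ↥a, ⁅(Z : L), X'⁆ = lam Z • X')
    (h : ⁅X, θ X'⁆ = 0) :
    X = 0 ∨ X' = 0 := by
  by_contra! hne
  have hN : ∀ u, 0 ≤ -B u (θ u) := fun u =>
    (eq_or_ne u 0).elim (fun hu => by simp [hu]) fun hu => (hBpos u hu).le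
  have hX'_root : X' ∈ restrictedRootSpace a lam := hX'
  set H : a := ⟨⁅θ X', X'⁆, lie_apply_self_mem θ hθ ha_sub_p ha_max hX'_root⟩
  have hBH : ∀ Z : a, B H Z = lam Z * -B X' (θ X') :=
    form_lie_apply_of_mem_restrictedRootSpace hBsymm hBinv hX'_root (θ X')
  have hNH : -B H (θ H) = lam H * -B X' (θ X') := by
    rw [ha_sub_p H H.2, map_neg, neg_neg, hBH]
  have hHX : ⁅(H : L), X⁆ = ⁅θ X', ⁅X', X⁆⁆ := by
    rw [lie_lie, ← lie_skew (θ X') X, h, neg_zero, lie_zero, sub_zero]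
  have hNX : lam H * -B X (θ X) = B ⁅X', X⁆ (θ ⁅X', X⁆) := by
    rw [← neg_neg (B ⁅X', X⁆ _), ← form_apply_lie_lie_apply θ hBinv, ← hHX, hX H, map_smul,
      LinearMap.smul_apply, smul_eq_mul, mul_neg]
  have hlamH : lam H = 0 := by
    nlinarith [hN ⁅X', X⁆, hN H, hBpos X hne.1, hBpos X' hne.2]
  have hH : (H : L) = 0 := by
    by_contra hH
    exact (hBpos H hH).ne' (by rw [hNH, hlamH, zero_mul])
  refine hlam (LinearMap.ext fun Z => ?_)
  have hZ := hBH Z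
  rw [hH, map_zero, LinearMap.zero_apply, eq_comm] at hZ
  exact (mul_eq_zero.mp hZ).resolve_right (hBpos X' hne.2).ne'

/-- **Lemma.** Let `g` be a finite-dimensional real Lie algebra with a Cartan-type involution
`θ` and an invariant, `θ`-invariant symmetric bilinear form `B` such that
`B_θ(x, y) = -B(x, θ y)` is positive definite.  Let `a` be a maximal abelian subspace of the
`(-1)`-eigenspace `p` of `θ`, `λ` a nonzero linear functional on `a` whose restricted root
space `g_λ` is nonzero, and `X, X' ∈ g_λ`.  If `[X, θ X'] = 0` then `X = 0` or `X' = 0`. -/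
theorem restricted_root_bracket_theta_eq_zero (L : Type*) [LieRing L] [LieAlgebra ℝ L]
    [FiniteDimensional ℝ L]
    (θ : L →ₗ⁅ℝ⁆ L) (hθ : ∀ x, θ (θ x) = x)
    (B : L →ₗ[ℝ] L →ₗ[ℝ] ℝ)
    (hBsymm : ∀ x y, B x y = B y x)
    (hBinv : ∀ x y z : L, B ⁅x, y⁆ z + B y ⁅x, z⁆ = 0)
    (hBθ : ∀ x y, B (θ x) (θ y) = B x y)
    (hBpos : ∀ x : L, x ≠ 0 → 0 < -B x (θ x))
    (a : Submodule ℝ L)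
    (ha_sub_p : ∀ x ∈ a, θ x = -x)
    (ha_abelian : ∀ x ∈ a, ∀ y ∈ a, ⁅x, y⁆ = 0)
    (ha_max : ∀ x : L, θ x = -x → (∀ z ∈ a, ⁅x, z⁆ = 0) → x ∈ a)
    (lam : ↥a →ₗ[ℝ] ℝ) (hlam : lam ≠ 0)
    (hroot_ne : ∃ Y : L, Y ≠ 0 ∧ ∀ Z : ↥a, ⁅(Z : L), Y⁆ = lam Z • Y)
    (X X' : L)
    (hX : ∀ Z : ↥a, ⁅(Z : L), X⁆ = lam Z • X)
    (hX' : ∀ Z : ↥a, ⁅(Z : L), X'⁆ = lam Z • X')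
    (h : ⁅X, θ X'⁆ = 0) :
    X = 0 ∨ X' = 0 :=
  restricted_root_bracket_theta_eq_zero_general L θ hθ B hBsymm hBinv hBpos a ha_sub_p ha_max lam
    hlam X X' hX hX' h
end

section
/- Let G be a locally compact topological group and let H and L be closed subsets of G. The relation ⋔ is symmetric: if for every compact subset C of G the set C·H·C⁻¹ ∩ L is compact, then for every compact subset C of G the set C·L·C⁻¹ ∩ H is compact. -/
open scoped Pointwise

namespace Set

variable {G : Type*} [Group G]

theorem setOf_mul_mul_inv_eq (C H : Set G) :
    {x | ∃ c ∈ C, ∃ y ∈ H, ∃ c' ∈ C, x = c * y * c'⁻¹} = C * H * C⁻¹ := by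
  ext x
  simp only [mem_ofPred_eq, mem_mul, mem_inv]
  constructor
  · rintro ⟨c, hc, y, hy, c', hc', rfl⟩
    exact ⟨_, ⟨c, hc, y, hy, rfl⟩, c'⁻¹, by rwa [inv_inv], rfl⟩
  · rintro ⟨_, ⟨c, hc, y, hy, rfl⟩, d, hd, rfl⟩
    exact ⟨c, hc, y, hy, d⁻¹, hd, by rw [inv_inv]⟩

/-- The middle factor `y` of a point `c * y * c'⁻¹ ∈ H` already lies in `C⁻¹ * H * C`. -/
theorem mul_mul_inv_inter_eq (C H L : Set G) :
    C * L * C⁻¹ ∩ H = C * (C⁻¹ * H * C ∩ L) * C⁻¹ ∩ H := by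
  refine Subset.antisymm ?_
    (inter_subset_inter_left H (mul_subset_mul_right (mul_subset_mul_left inter_subset_right)))
  rintro _ ⟨⟨_, ⟨c, hc, y, hy, rfl⟩, d, hd, rfl⟩, hx⟩
  have hy' : y ∈ C⁻¹ * H * C :=
    ⟨_, ⟨c⁻¹, inv_mem_inv.mpr hc, _, hx, rfl⟩, d⁻¹, hd, by group⟩
  exact ⟨⟨_, ⟨c, hc, y, ⟨hy', hy⟩, rfl⟩, d, hd, rfl⟩, hx⟩

end Set

theorem pitchfork_symm_general (G : Type*) [Group G] [TopologicalSpace G]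
    [IsTopologicalGroup G]
    (H L : Set G) (hH : IsClosed H)
    (h : ∀ C : Set G, IsCompact C →
      IsCompact ({x | ∃ c ∈ C, ∃ y ∈ H, ∃ c' ∈ C, x = c * y * c'⁻¹} ∩ L)) :
    ∀ C : Set G, IsCompact C →
      IsCompact ({x | ∃ c ∈ C, ∃ y ∈ L, ∃ c' ∈ C, x = c * y * c'⁻¹} ∩ H) := by
  simp_rw [Set.setOf_mul_mul_inv_eq] at h ⊢
  intro C hC
  have hK : IsCompact (C⁻¹ * H * C ∩ L) := by simpa only [inv_inv] using h C⁻¹ hC.inv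
  rw [Set.mul_mul_inv_inter_eq C H L]
  exact ((hC.mul hK).mul hC.inv).inter_right hH

/-- **Fact.** For a locally compact topological group `G` and closed subsets `H, L ⊆ G`,
the relation `⋔` is symmetric: if `C·H·C⁻¹ ∩ L` is compact for every compact `C ⊆ G`,
then `C·L·C⁻¹ ∩ H` is compact for every compact `C ⊆ G`. -/
theorem pitchfork_symm (G : Type*) [Group G] [TopologicalSpace G]
    [IsTopologicalGroup G] [LocallyCompactSpace G]
    (H L : Set G) (hH : IsClosed H) (hL : IsClosed L)
    (h : ∀ C : Set G, IsCompact C →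
      IsCompact ({x | ∃ c ∈ C, ∃ y ∈ H, ∃ c' ∈ C, x = c * y * c'⁻¹} ∩ L)) :
    ∀ C : Set G, IsCompact C →
      IsCompact ({x | ∃ c ∈ C, ∃ y ∈ L, ∃ c' ∈ C, x = c * y * c'⁻¹} ∩ H) :=
  pitchfork_symm_general G H L hH h
end

section
/- Let G be a locally compact Hausdorff topological group and let H and L be closed subgroups of G. Then the left-translation action of L on the homogeneous space G/H is proper (i.e., the map L × G/H → G/H × G/H, (l, x) ↦ (l·x, x), is a proper map: preimages of compact sets are compact) if and only if H ⋔ L in G, i.e., for every compact subset C of G the set C·H·C⁻¹ ∩ L is compact. -/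
/-!
Write `S_C = C·H·C⁻¹ ∩ L`. For `l ∈ L` and `c, c' ∈ G` one has `l • c'H = cH` iff
`l ∈ cHc'⁻¹`, so `S_C` is exactly the projection to `L` of the preimage of `CH/H × CH/H`
under `(l, x) ↦ (l • x, x)`. Properness therefore gives compactness of `S_C`. Conversely, in the
locally compact group `G` every compact subset of `G/H` is the image of a compact `C ⊆ G`, so a
compact `K ⊆ G/H × G/H` lies in `CH/H × CH/H`, whose preimage lies in `S_C × CH/H`; when `H` is
closed, `G/H` is Hausdorff and the preimage of `K` is a closed subset of this compact set.
-/

open Set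

theorem IsOpenMap.exists_isCompact_image_superset {X Y : Type*} [TopologicalSpace X]
    [TopologicalSpace Y] [WeaklyLocallyCompactSpace X] {f : X → Y} (hf : IsOpenMap f)
    (hsurj : Function.Surjective f) {K : Set Y} (hK : IsCompact K) :
    ∃ C : Set X, IsCompact C ∧ K ⊆ f '' C := by
  choose V hVc hVx using fun x : X => exists_compact_mem_nhds x
  have hcover : K ⊆ ⋃ x, f '' interior (V x) := fun y _ => by
    obtain ⟨x, rfl⟩ := hsurj y
    exact mem_iUnion.2 ⟨x, mem_image_of_mem f (mem_interior_iff_mem_nhds.2 (hVx x))⟩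
  obtain ⟨t, ht⟩ := hK.elim_finite_subcover _ (fun x => hf _ isOpen_interior) hcover
  refine ⟨⋃ x ∈ t, V x, t.isCompact_biUnion fun x _ => hVc x, ht.trans ?_⟩
  rw [image_iUnion₂]
  exact iUnion₂_mono fun x _ => image_mono interior_subset

namespace QuotientGroup

variable {G : Type*} [Group G]

def smulPair (L H : Subgroup G) (p : L × (G ⧸ H)) : (G ⧸ H) × (G ⧸ H) :=
  ((p.1 : G) • p.2, p.2)

variable {H L : Subgroup G}

theorem smul_mk_eq_mk_iff {g c c' : G} :
    g • (c' : G ⧸ H) = c ↔ ∃ h ∈ (H : Set G), g = c * h * c'⁻¹ := by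
  rw [MulAction.Quotient.smul_mk, smul_eq_mul, eq_comm, QuotientGroup.eq]
  constructor
  · exact fun hmem => ⟨_, hmem, by group⟩
  · rintro ⟨h, hh, rfl⟩
    simpa [mul_assoc] using hh

theorem image_coe_fst_preimage_smulPair_mk_image_prod (C : Set G) :
    (fun p : L × (G ⧸ H) => (p.1 : G)) ''
        (smulPair L H ⁻¹' ((mk '' C : Set (G ⧸ H)) ×ˢ (mk '' C : Set (G ⧸ H)))) =
      {x | ∃ c ∈ C, ∃ h ∈ (H : Set G), ∃ c' ∈ C, x = c * h * c'⁻¹} ∩ (L : Set G) := by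
  ext x
  constructor
  · rintro ⟨⟨l, y⟩, ⟨⟨c, hc, hlc⟩, ⟨c', hc', rfl⟩⟩, rfl⟩
    obtain ⟨h, hh, hl⟩ := smul_mk_eq_mk_iff.1 hlc.symm
    exact ⟨⟨c, hc, h, hh, c', hc', hl⟩, l.2⟩
  · rintro ⟨⟨c, hc, h, hh, c', hc', rfl⟩, hL⟩
    refine ⟨(⟨_, hL⟩, (c' : G ⧸ H)), ⟨⟨c, hc, ?_⟩, c', hc', rfl⟩, rfl⟩
    exact (smul_mk_eq_mk_iff.2 ⟨h, hh, rfl⟩).symm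

variable [TopologicalSpace G] [IsTopologicalGroup G]

theorem continuous_smulPair : Continuous (smulPair L H) := by
  unfold smulPair
  fun_prop

theorem isCompact_preimage_smulPair [T2Space (G ⧸ H)] {C : Set G} (hC : IsCompact C)
    (hCL : IsCompact ({x | ∃ c ∈ C, ∃ h ∈ (H : Set G), ∃ c' ∈ C, x = c * h * c'⁻¹} ∩
      (L : Set G)))
    {K : Set ((G ⧸ H) × (G ⧸ H))} (hK : IsCompact K)
    (hKC : K ⊆ (mk '' C : Set (G ⧸ H)) ×ˢ (mk '' C : Set (G ⧸ H))) :
    IsCompact (smulPair L H ⁻¹' K) := by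
  set P := smulPair L H ⁻¹' ((mk '' C : Set (G ⧸ H)) ×ˢ (mk '' C : Set (G ⧸ H)))
  have hP : IsCompact (Prod.fst '' P) := by
    rw [Subtype.isCompact_iff, image_image, image_coe_fst_preimage_smulPair_mk_image_prod]
    exact hCL
  refine (hP.prod (hC.image continuous_mk)).of_isClosed_subset
    (hK.isClosed.preimage continuous_smulPair) ?_
  exact (preimage_mono hKC).trans fun p hp => ⟨mem_image_of_mem _ hp, hp.2⟩

end QuotientGroup

open QuotientGroup in
theorem proper_action_on_quotient_iff_pitchfork_general (G : Type*) [Group G] [TopologicalSpace G]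
    [IsTopologicalGroup G] [LocallyCompactSpace G]
    (H L : Subgroup G) (hH : IsClosed (H : Set G)) :
    (∀ K : Set ((G ⧸ H) × (G ⧸ H)), IsCompact K →
      IsCompact ((fun p : ↥L × (G ⧸ H) => ((p.1 : G) • p.2, p.2)) ⁻¹' K)) ↔
    (∀ C : Set G, IsCompact C →
      IsCompact ({x | ∃ c ∈ C, ∃ h ∈ (H : Set G), ∃ c' ∈ C, x = c * h * c'⁻¹} ∩
        (L : Set G))) := by
  constructor
  · intro hproper C hC
    rw [← image_coe_fst_preimage_smulPair_mk_image_prod]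
    have hCH : IsCompact (mk '' C : Set (G ⧸ H)) := hC.image continuous_mk
    exact (hproper _ (hCH.prod hCH)).image (continuous_subtype_val.comp continuous_fst)
  · intro hpitchfork K hK
    have : IsClosed (H : Set G) := hH
    obtain ⟨C, hC, hKC⟩ := isOpenMap_coe.exists_isCompact_image_superset mk_surjective
      ((hK.image continuous_fst).union (hK.image continuous_snd))
    exact isCompact_preimage_smulPair hC (hpitchfork C hC) hK
      (subset_prod.trans (prod_mono (subset_union_left.trans hKC)
        (subset_union_right.trans hKC)))

/-- **Fact.** Let `G` be a locally compact Hausdorff topological group and `H, L` closed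
subgroups.  The left-translation action of `L` on `G/H` is proper (preimages of compact
sets under `(l, x) ↦ (l·x, x)` are compact) if and only if `H ⋔ L` in `G`, i.e.
`C·H·C⁻¹ ∩ L` is compact for every compact `C ⊆ G`. -/
theorem proper_action_on_quotient_iff_pitchfork (G : Type*) [Group G] [TopologicalSpace G]
    [IsTopologicalGroup G] [LocallyCompactSpace G] [T2Space G]
    (H L : Subgroup G) (hH : IsClosed (H : Set G)) (hL : IsClosed (L : Set G)) :
    (∀ K : Set ((G ⧸ H) × (G ⧸ H)), IsCompact K →
      IsCompact ((fun p : ↥L × (G ⧸ H) => ((p.1 : G) • p.2, p.2)) ⁻¹' K)) ↔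
    (∀ C : Set G, IsCompact C →
      IsCompact ({x | ∃ c ∈ C, ∃ h ∈ (H : Set G), ∃ c' ∈ C, x = c * h * c'⁻¹} ∩
        (L : Set G))) :=
  proper_action_on_quotient_iff_pitchfork_general G H L hH
end
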